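/- arXiv:2203.12664 — 5 statements merged into one kernel-verified Lean document; each statement's English description precedes it below -/
import Mathlib

section
/- Let P be uniform on the closed interval [a,b] (a<b). For each n ≥ 1, the set {a + (2j−1)(b−a)/(2n) : 1 ≤ j ≤ n} attains the minimum of ∫ min_{c∈γ}(x−c)² dP over all sets γ ⊂ ℝ of at most n points, and the minimum value (the nth quantization error) equals (b−a)²/(12n²). -/
open MeasureTheory Set

noncomputable def unif (a b : ℝ) : Measure ℝ :=
  (ENNReal.ofReal (b - a))⁻¹ • (volume.restrict (Icc a b))

noncomputable def mix (p : ℝ) (P₁ P₂ : Measure ℝ) : Measure ℝ :=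
  ENNReal.ofReal p • P₁ + ENNReal.ofReal (1 - p) • P₂

noncomputable def distortion (P : Measure ℝ) (γ : Finset ℝ) : ℝ :=
  ∫ x, sInf ((fun c => (x - c) ^ 2) '' (γ : Set ℝ)) ∂P

noncomputable def quantErr (P : Measure ℝ) (n : ℕ) : ℝ :=
  sInf { v | ∃ γ : Finset ℝ, γ.Nonempty ∧ γ.card ≤ n ∧ v = distortion P γ }

def IsOptimal (P : Measure ℝ) (n : ℕ) (γ : Finset ℝ) : Prop :=
  γ.Nonempty ∧ γ.card ≤ n ∧ distortion P γ = quantErr P n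

/-! A set of `m` points cuts an interval of length `L` into its Voronoi cells. On a cell of length
`ℓ` the squared distance to the cell's point integrates to at least `ℓ ^ 3 / 12`, with equality
when the point is the midpoint, and by convexity of `t ↦ t ^ 3` these contributions add up to at
least `L ^ 3 / (12 * m ^ 2)`. The lower bound is proved by induction on the set, splitting the
interval at the midpoint between its two largest points; the midpoints of `n` equal subintervals
attain it. -/

open Finset intervalIntegral

noncomputable def sqInfDist (γ : Finset ℝ) (x : ℝ) : ℝ :=
  sInf ((fun c => (x - c) ^ 2) '' (γ : Set ℝ))

section sqInfDist

variable {γ s : Finset ℝ} {c x : ℝ}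

lemma sqInfDist_eq_inf' (hγ : γ.Nonempty) (x : ℝ) :
    sqInfDist γ x = γ.inf' hγ (fun c => (x - c) ^ 2) :=
  (inf'_eq_csInf_image γ hγ _).symm

@[simp]
lemma sqInfDist_empty (x : ℝ) : sqInfDist ∅ x = 0 := by
  simp [sqInfDist]

@[simp]
lemma sqInfDist_singleton (c x : ℝ) : sqInfDist {c} x = (x - c) ^ 2 := by
  simp [sqInfDist_eq_inf']

lemma sqInfDist_insert (hs : s.Nonempty) (c x : ℝ) :
    sqInfDist (insert c s) x = min ((x - c) ^ 2) (sqInfDist s x) := by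
  rw [sqInfDist_eq_inf' (insert_nonempty c s), sqInfDist_eq_inf' hs, inf'_insert]

lemma sqInfDist_le (hc : c ∈ γ) (x : ℝ) : sqInfDist γ x ≤ (x - c) ^ 2 := by
  rw [sqInfDist_eq_inf' ⟨c, hc⟩]
  exact inf'_le _ hc

lemma continuous_sqInfDist (γ : Finset ℝ) : Continuous (sqInfDist γ) := by
  rcases γ.eq_empty_or_nonempty with rfl | hγ
  · simpa only [funext sqInfDist_empty] using continuous_const
  · simp only [funext (sqInfDist_eq_inf' hγ)]
    exact Continuous.finset_inf'_apply hγ fun c _ => by fun_prop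

lemma sqInfDist_insert_of_le_midpoint (hs : s.Nonempty) (hsc : ∀ y ∈ s, y < c)
    (hx : x ≤ (s.max' hs + c) / 2) : sqInfDist (insert c s) x = sqInfDist s x := by
  have hmax : s.max' hs < c := hsc _ (s.max'_mem hs)
  have : sqInfDist s x ≤ (x - c) ^ 2 :=
    (sqInfDist_le (s.max'_mem hs) x).trans (by nlinarith)
  rw [sqInfDist_insert hs, min_eq_right this]

lemma sqInfDist_insert_of_midpoint_le (hs : s.Nonempty) (hsc : ∀ y ∈ s, y < c)
    (hx : (s.max' hs + c) / 2 ≤ x) : sqInfDist (insert c s) x = (x - c) ^ 2 := by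
  have : (x - c) ^ 2 ≤ sqInfDist s x := by
    rw [sqInfDist_eq_inf' hs]
    refine le_inf' hs _ fun y hy => ?_
    have := s.le_max' y hy
    nlinarith [hsc y hy]
  rw [sqInfDist_insert hs, min_eq_left this]

end sqInfDist

lemma integral_sub_sq (c u v : ℝ) :
    ∫ x in u..v, (x - c) ^ 2 = ((v - c) ^ 3 - (u - c) ^ 3) / 3 := by
  norm_num [integral_comp_sub_right (fun y => y ^ 2) c]

lemma le_integral_sub_sq (c : ℝ) {u v : ℝ} (huv : u ≤ v) :
    (v - u) ^ 3 / 12 ≤ ∫ x in u..v, (x - c) ^ 2 := by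
  rw [integral_sub_sq]
  nlinarith [sq_nonneg (u + v - 2 * c), sq_nonneg (v - u)]

lemma integral_sub_midpoint_sq (u v : ℝ) :
    ∫ x in u..v, (x - (u + v) / 2) ^ 2 = (v - u) ^ 3 / 12 := by
  rw [integral_sub_sq]; ring

lemma add_pow_three_div_sq_succ_le {k A B : ℝ} (hk : 0 < k) (hA : 0 ≤ A) (hB : 0 ≤ B) :
    (A + B) ^ 3 / (k + 1) ^ 2 ≤ A ^ 3 / k ^ 2 + B ^ 3 := by
  obtain ⟨p, rfl⟩ : ∃ p, A = k * p := ⟨A / k, by field_simp⟩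
  have hp : 0 ≤ p := nonneg_of_mul_nonneg_right (by linarith) hk
  have hkp : (k * p) ^ 3 / k ^ 2 = k * p ^ 3 := by field_simp
  rw [hkp, div_le_iff₀ (by positivity)]
  -- the difference of the two sides is `k * (p - B) ^ 2 * ((2 * k + 1) * p + (k + 2) * B)`
  nlinarith [mul_nonneg hk.le (mul_nonneg (sq_nonneg (p - B))
    (by positivity : 0 ≤ (2 * k + 1) * p + (k + 2) * B))]

lemma le_integral_sqInfDist (γ : Finset ℝ) {u v : ℝ} (huv : u ≤ v) :
    (v - u) ^ 3 / (12 * (#γ : ℝ) ^ 2) ≤ ∫ x in u..v, sqInfDist γ x := by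
  induction γ using Finset.induction_on_max generalizing u v with
  | empty => simp -- the left side is a division by `#∅ = 0`
  | insert c s hsc ih =>
    rcases s.eq_empty_or_nonempty with rfl | hs
    · simpa using le_integral_sub_sq c huv
    set m := (s.max' hs + c) / 2
    -- `m` clamped to `[u, v]`: left of it `c` is never the nearest point, right of it always
    set t := max u (min v m)
    have hut : u ≤ t := le_max_left _ _
    have htv : t ≤ v := max_le huv (min_le_left _ _)
    have hcard : (#(insert c s) : ℝ) = #s + 1 := by
      rw [card_insert_of_notMem fun h => lt_irrefl c (hsc c h)]
      push_cast; rfl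
    have hint (γ : Finset ℝ) (p q : ℝ) : IntervalIntegrable (sqInfDist γ) volume p q :=
      (continuous_sqInfDist γ).intervalIntegrable p q
    have hleft : ∫ x in u..t, sqInfDist s x ≤ ∫ x in u..t, sqInfDist (insert c s) x := by
      refine integral_mono_on_of_le_Ioo hut (hint _ _ _) (hint _ _ _) fun x hx => ?_
      have hxm : x < min v m := (lt_max_iff.mp hx.2).resolve_left hx.1.not_gt
      exact (sqInfDist_insert_of_le_midpoint hs hsc (hxm.le.trans (min_le_right _ _))).ge
    have hright : ∫ x in t..v, (x - c) ^ 2 ≤ ∫ x in t..v, sqInfDist (insert c s) x := by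
      refine integral_mono_on_of_le_Ioo htv
        ((by fun_prop : Continuous fun x : ℝ => (x - c) ^ 2).intervalIntegrable _ _) (hint _ _ _)
        fun x hx => ?_
      have hmx : min v m < x := (max_lt_iff.mp hx.1).2
      have : m < x := (min_lt_iff.mp hmx).resolve_left hx.2.not_gt
      exact (sqInfDist_insert_of_midpoint_le hs hsc this.le).ge
    have hs0 : (0 : ℝ) < #s := by exact_mod_cast hs.card_pos
    calc (v - u) ^ 3 / (12 * (#(insert c s) : ℝ) ^ 2)
        = ((t - u) + (v - t)) ^ 3 / (#s + 1) ^ 2 / 12 := by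
          rw [hcard, div_div, mul_comm _ (12 : ℝ), sub_add_sub_cancel']
      _ ≤ ((t - u) ^ 3 / #s ^ 2 + (v - t) ^ 3) / 12 := by
        gcongr
        exact add_pow_three_div_sq_succ_le hs0 (sub_nonneg.mpr hut) (sub_nonneg.mpr htv)
      _ = (t - u) ^ 3 / (12 * #s ^ 2) + (v - t) ^ 3 / 12 := by ring
      _ ≤ (∫ x in u..t, sqInfDist s x) + ∫ x in t..v, (x - c) ^ 2 :=
        add_le_add (ih hut) (le_integral_sub_sq c htv)
      _ ≤ (∫ x in u..t, sqInfDist (insert c s) x) + ∫ x in t..v, sqInfDist (insert c s) x :=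
        add_le_add hleft hright
      _ = ∫ x in u..v, sqInfDist (insert c s) x :=
        integral_add_adjacent_intervals (hint _ _ _) (hint _ _ _)

lemma integral_sqInfDist_le_of_midpoint_mem {γ : Finset ℝ} {s : ℕ → ℝ} (hs : Monotone s)
    (n : ℕ) (hmid : ∀ j < n, (s j + s (j + 1)) / 2 ∈ γ) :
    ∫ x in s 0..s n, sqInfDist γ x ≤ ∑ j ∈ range n, (s (j + 1) - s j) ^ 3 / 12 := by
  rw [← sum_integral_adjacent_intervals fun j _ =>
    (continuous_sqInfDist γ).intervalIntegrable _ _]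
  refine sum_le_sum fun j hj => ?_
  rw [← integral_sub_midpoint_sq]
  exact integral_mono_on (hs j.le_succ) ((continuous_sqInfDist γ).intervalIntegrable _ _)
    ((by fun_prop : Continuous fun x : ℝ => _).intervalIntegrable _ _)
    fun x _ => sqInfDist_le (hmid j (mem_range.mp hj)) x

lemma distortion_unif {a b : ℝ} (hab : a ≤ b) (γ : Finset ℝ) :
    distortion (unif a b) γ = (b - a)⁻¹ * ∫ x in a..b, sqInfDist γ x := by
  rw [distortion, unif, MeasureTheory.integral_smul_measure, ENNReal.toReal_inv,
    ENNReal.toReal_ofReal (sub_nonneg.mpr hab), smul_eq_mul, integral_of_le hab,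
    ← integral_Icc_eq_integral_Ioc]
  rfl

lemma le_distortion_unif {a b : ℝ} (hab : a < b) {γ : Finset ℝ} (hγ : γ.Nonempty) {n : ℕ}
    (hγn : #γ ≤ n) : (b - a) ^ 2 / (12 * n ^ 2) ≤ distortion (unif a b) γ := by
  have hba : 0 < b - a := sub_pos.mpr hab
  have hγ0 : (0 : ℝ) < #γ := by exact_mod_cast hγ.card_pos
  calc (b - a) ^ 2 / (12 * n ^ 2) = (b - a)⁻¹ * ((b - a) ^ 3 / (12 * n ^ 2)) := by
        field_simp
    _ ≤ (b - a)⁻¹ * ((b - a) ^ 3 / (12 * #γ ^ 2)) := by gcongr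
    _ ≤ (b - a)⁻¹ * ∫ x in a..b, sqInfDist γ x := by
        gcongr
        exact le_integral_sqInfDist γ hab.le
    _ = distortion (unif a b) γ := (distortion_unif hab.le γ).symm

lemma distortion_unif_midpoints_le {a b : ℝ} (hab : a ≤ b) {n : ℕ} (hn : 0 < n) :
    distortion (unif a b)
        ((range n).image fun j : ℕ => a + (2 * (j : ℝ) + 1) * (b - a) / (2 * n)) ≤
      (b - a) ^ 2 / (12 * n ^ 2) := by
  have hn' : (0 : ℝ) < n := by exact_mod_cast hn
  set s : ℕ → ℝ := fun j => a + j * (b - a) / n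
  have hs : Monotone s := fun i j hij => by
    simp only [s]; gcongr
  have hstep (j : ℕ) : s (j + 1) - s j = (b - a) / n := by
    simp only [s]; push_cast; ring
  have hmid (j : ℕ) (hj : j < n) : (s j + s (j + 1)) / 2 ∈
      (range n).image fun j : ℕ => a + (2 * (j : ℝ) + 1) * (b - a) / (2 * n) :=
    mem_image.mpr ⟨j, mem_range.mpr hj, by simp only [s]; push_cast; field_simp; ring⟩
  have hgrid := integral_sqInfDist_le_of_midpoint_mem hs n hmid
  simp only [hstep, sum_const, card_range, nsmul_eq_mul] at hgrid
  have hs0 : s 0 = a := by simp [s]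
  have hsn : s n = b := by simp only [s]; field_simp; ring
  rw [hs0, hsn] at hgrid
  rw [distortion_unif hab]
  calc (b - a)⁻¹ * ∫ x in a..b, sqInfDist _ x
        ≤ (b - a)⁻¹ * (n * (((b - a) / n) ^ 3 / 12)) := by gcongr
    _ = (b - a) ^ 2 / (12 * n ^ 2) := by
        rcases hab.eq_or_lt with rfl | hab
        · simp
        · field_simp [(sub_pos.mpr hab).ne']

theorem stmt1 (a b : ℝ) (hab : a < b) (n : ℕ) (hn : 1 ≤ n) :
    IsOptimal (unif a b) n
      ((Finset.range n).image (fun j : ℕ => a + (2 * (j : ℝ) + 1) * (b - a) / (2 * n))) ∧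
    quantErr (unif a b) n = (b - a) ^ 2 / (12 * n ^ 2) := by
  set γ := (Finset.range n).image (fun j : ℕ => a + (2 * (j : ℝ) + 1) * (b - a) / (2 * n))
  have hγ : γ.Nonempty := (nonempty_range_iff.mpr (by omega)).image _
  have hγn : #γ ≤ n := card_image_le.trans (card_range n).le
  have hopt : distortion (unif a b) γ = (b - a) ^ 2 / (12 * n ^ 2) :=
    (distortion_unif_midpoints_le hab.le hn).antisymm (le_distortion_unif hab hγ hγn)
  have hleast :
      IsLeast { v | ∃ δ : Finset ℝ, δ.Nonempty ∧ #δ ≤ n ∧ v = distortion (unif a b) δ }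
      ((b - a) ^ 2 / (12 * n ^ 2)) :=
    ⟨⟨γ, hγ, hγn, hopt.symm⟩, fun _ ⟨δ, hδ, hδn, hv⟩ => hv ▸ le_distortion_unif hab hδ hδn⟩
  have hquant : quantErr (unif a b) n = (b - a) ^ 2 / (12 * n ^ 2) := hleast.csInf_eq
  exact ⟨⟨hγ, hγn, hopt.trans hquant.symm⟩, hquant⟩
end

section
/- Let P = (1/5)·P₁ + (4/5)·P₂ where P₁ is uniform on [0,1] and P₂ is uniform on [1,2]. For any two-point set γ = {a₁, a₂} with 0 < a₁ < a₂ < 2, the distortion error ∫ min_{c∈γ}(x−c)² dP is at least 317/3840, with equality when a₁ = 11/16 and a₂ = 25/16. -/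
open MeasureTheory Set

lemma distortion_pair_eq (a b : ℝ) :
    distortion (mix (1/5) (unif 0 1) (unif 1 2)) {a, b}
    = (1/5) * (∫ x in (0:ℝ)..1, min ((x-a)^2) ((x-b)^2))
      + (4/5) * (∫ x in (1:ℝ)..2, min ((x-a)^2) ((x-b)^2)) := by
  have hg : Continuous (fun x : ℝ => min ((x-a)^2) ((x-b)^2)) := by fun_prop
  have hfun : (fun x : ℝ => sInf ((fun c => (x - c) ^ 2) '' (({a, b} : Finset ℝ) : Set ℝ)))
      = fun x => min ((x-a)^2) ((x-b)^2) := by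
    funext x
    rw [Finset.coe_insert, Finset.coe_singleton, Set.image_pair, csInf_pair]
  have h1 : IntegrableOn (fun x : ℝ => min ((x-a)^2) ((x-b)^2)) (Icc 0 1) volume :=
    hg.integrableOn_Icc
  have h2 : IntegrableOn (fun x : ℝ => min ((x-a)^2) ((x-b)^2)) (Icc 1 2) volume :=
    hg.integrableOn_Icc
  rw [distortion, hfun, mix, unif, unif]
  norm_num
  rw [integral_add_measure (h1.smul_measure (by norm_num)) (h2.smul_measure (by norm_num)),
    integral_smul_measure, integral_smul_measure]
  rw [integral_Icc_eq_integral_Ioc, integral_Icc_eq_integral_Ioc,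
    ← intervalIntegral.integral_of_le (by norm_num : (0:ℝ) ≤ 1),
    ← intervalIntegral.integral_of_le (by norm_num : (1:ℝ) ≤ 2)]
  rw [ENNReal.toReal_ofReal (by norm_num), ENNReal.toReal_ofReal (by norm_num)]
  rw [smul_eq_mul, smul_eq_mul]

lemma integ_sq (u v c : ℝ) : ∫ x in u..v, (x - c)^2 = ((v-c)^3 - (u-c)^3)/3 := by
  have h := intervalIntegral.integral_comp_sub_right (a := u) (b := v) (fun x => x^2) c
  rw [h, integral_pow]
  norm_num

lemma int_min_left (u v a b : ℝ) (huv : u ≤ v) (hab : a ≤ b) (hv : v ≤ (a+b)/2) :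
    ∫ x in u..v, min ((x-a)^2) ((x-b)^2) = ((v-a)^3 - (u-a)^3)/3 := by
  rw [← integ_sq u v a]
  apply intervalIntegral.integral_congr
  intro x hx
  rw [Set.uIcc_of_le huv] at hx
  exact min_eq_left (by nlinarith [hx.2])

lemma int_min_right (u v a b : ℝ) (huv : u ≤ v) (hab : a ≤ b) (hu : (a+b)/2 ≤ u) :
    ∫ x in u..v, min ((x-a)^2) ((x-b)^2) = ((v-b)^3 - (u-b)^3)/3 := by
  rw [← integ_sq u v b]
  apply intervalIntegral.integral_congr
  intro x hx
  rw [Set.uIcc_of_le huv] at hx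
  exact min_eq_right (by nlinarith [hx.1])

lemma int_min_split (u v a b : ℝ) (hab : a ≤ b) (hu : u ≤ (a+b)/2) (hv : (a+b)/2 ≤ v) :
    ∫ x in u..v, min ((x-a)^2) ((x-b)^2)
      = (((a+b)/2-a)^3 - (u-a)^3)/3 + ((v-b)^3 - ((a+b)/2-b)^3)/3 := by
  have hg : Continuous (fun x : ℝ => min ((x-a)^2) ((x-b)^2)) := by fun_prop
  rw [← intervalIntegral.integral_add_adjacent_intervals
      (b := (a+b)/2) (hg.intervalIntegrable _ _) (hg.intervalIntegrable _ _),
    int_min_left u ((a+b)/2) a b hu hab le_rfl,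
    int_min_right ((a+b)/2) v a b hv hab le_rfl]

lemma distortion_formula (a b : ℝ) (hab : a ≤ b) (h0 : 0 ≤ (a+b)/2) (h2 : (a+b)/2 ≤ 2) :
    distortion (mix (1/5) (unif 0 1) (unif 1 2)) {a, b}
    = if (a+b)/2 ≤ 1 then
        (1/5) * ((((a+b)/2-a)^3 - (0-a)^3)/3 + ((1-b)^3 - ((a+b)/2-b)^3)/3)
        + (4/5) * (((2-b)^3 - (1-b)^3)/3)
      else
        (1/5) * (((1-a)^3 - (0-a)^3)/3)
        + (4/5) * ((((a+b)/2-a)^3 - (1-a)^3)/3 + ((2-b)^3 - ((a+b)/2-b)^3)/3) := by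
  rw [distortion_pair_eq]
  split_ifs with h
  · rw [int_min_split 0 1 a b hab h0 h, int_min_right 1 2 a b (by norm_num) hab h]
  · push_neg at h
    rw [int_min_left 0 1 a b (by norm_num) hab h.le, int_min_split 1 2 a b hab h.le h2]

set_option maxHeartbeats 1000000 in
theorem stmt3 :
    (∀ a₁ a₂ : ℝ, 0 < a₁ → a₁ < a₂ → a₂ < 2 →
      317 / 3840 ≤ distortion (mix (1/5) (unif 0 1) (unif 1 2)) {a₁, a₂}) ∧
    distortion (mix (1/5) (unif 0 1) (unif 1 2)) {11/16, 25/16} = 317 / 3840 := by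
  constructor
  · intro a b h0 hab h2
    rw [distortion_formula a b hab.le (by linarith) (by linarith)]
    split_ifs with h
    · nlinarith [sq_nonneg (a - 1/2), sq_nonneg (b - 3/2), sq_nonneg (a + b - 2),
        sq_nonneg (b - a), mul_pos h0 (sub_pos.2 hab), sq_nonneg (a - b + 1),
        mul_nonneg (sq_nonneg (a - 1/2)) h0.le,
        mul_nonneg (sq_nonneg (b - 3/2)) (sub_pos.2 h2).le]
    · push_neg at h
      rcases le_total (b - a) (7/8) with hc | hc
      · nlinarith [sq_nonneg (a - 11/16), sq_nonneg (b - 25/16), sq_nonneg (a + b - 9/4),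
          mul_nonneg (sq_nonneg (a + b - 9/4)) (by linarith : (0:ℝ) ≤ 7/8 - (b - a))]
      · rcases le_total (a + b) (9/4) with hz | hz
        · nlinarith [sq_nonneg (a + b - 9/4), sq_nonneg (b - a - 7/8), sq_nonneg (2*b - 25/8),
            sq_nonneg (2*a - 11/8),
            mul_nonneg (mul_nonneg (by linarith : (0:ℝ) ≤ 9/4 - (a+b))
              (by linarith : (0:ℝ) ≤ b - a - 7/8)) (by linarith : (0:ℝ) ≤ a + b - 2)]
        · nlinarith [sq_nonneg (a + b - 9/4), sq_nonneg (b - a - 7/8), sq_nonneg (2*b - 25/8),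
            mul_nonneg (by linarith : (0:ℝ) ≤ a + b - 9/4) (by linarith : (0:ℝ) ≤ b - a - 7/8),
            mul_nonneg (mul_nonneg (by linarith : (0:ℝ) ≤ a + b - 9/4)
              (by linarith : (0:ℝ) ≤ b - a - 7/8)) (by linarith : (0:ℝ) ≤ 25/8 - a - b)]
  · rw [distortion_formula (11/16) (25/16) (by norm_num) (by norm_num) (by norm_num)]
    norm_num
end

section
/- Let P = (1/3)·P₁ + (2/3)·P₂ where P₁ is uniform on [0,1] and P₂ is uniform on [1,2]. Then the optimal set of two-means for P is {1/2, 3/2}, with quantization error V₂ = 1/12. -/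
open MeasureTheory Set

/-!
For `a ≤ b` put `m = (a + b) / 2` and `d = (b - a) / 2`; the squared distance from `x` to the
nearer of `a, b` is `(|x - m| - d) ^ 2`. So for `X ~ P` the distortion of `{a, b}` is
`E (|X - m| - d) ^ 2 = (d - E |X - m|) ^ 2 + Var |X - m| ≥ Var |X - m|`. Since `y * |y| / 2` is an
antiderivative of `|y|`, everything is an explicit polynomial in `m` and `d` on each of the ranges
`m ≤ 0`, `0 ≤ m ≤ 1`, `1 ≤ m ≤ 2`, `2 ≤ m`, and there `Var |X - m| ≥ 1 / 12`, with equality at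
`m = 1`, `d = E |X - 1| = 1 / 2`, i.e. for `{1/2, 3/2}`.
-/

theorem hasDerivAt_mul_abs (y : ℝ) : HasDerivAt (fun y : ℝ => y * |y|) (2 * |y|) y := by
  refine hasDerivAt_of_hasDerivAt_of_ne' (f := fun y : ℝ => y * |y|) (g := fun y => 2 * |y|)
    (x := 0) (fun z hz => ?_) (by fun_prop) (by fun_prop) y
  exact ((hasDerivAt_id' z).mul (hasDerivAt_abs hz)).congr_deriv (by rw [self_mul_sign]; ring)

theorem integral_sq_abs_sub_sub (l u m d : ℝ) :
    ∫ x in l..u, (|x - m| - d) ^ 2 =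
      ((u - m) ^ 3 - (l - m) ^ 3) / 3 - d * ((u - m) * |u - m| - (l - m) * |l - m|)
        + d ^ 2 * (u - l) := by
  have hderiv : ∀ x, HasDerivAt
      (fun x => (x - m) ^ 3 / 3 - d * ((x - m) * |x - m|) + d ^ 2 * x) ((|x - m| - d) ^ 2) x := by
    intro x
    refine HasDerivAt.congr_deriv (((((hasDerivAt_id' x).sub_const m).pow 3).div_const 3).sub
      (((hasDerivAt_mul_abs (x - m)).comp x ((hasDerivAt_id' x).sub_const m)).const_mul d)
      |>.add ((hasDerivAt_id' x).const_mul (d ^ 2))) ?_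
    nlinarith [sq_abs (x - m)]
  rw [intervalIntegral.integral_eq_sub_of_hasDerivAt (fun x _ => hderiv x)
    ((by fun_prop : Continuous fun x => (|x - m| - d) ^ 2).intervalIntegrable l u)]
  ring

theorem integral_mix {p : ℝ} (hp₀ : 0 ≤ p) (hp₁ : p ≤ 1) {P₁ P₂ : Measure ℝ} {f : ℝ → ℝ}
    (h₁ : Integrable f P₁) (h₂ : Integrable f P₂) :
    ∫ x, f x ∂mix p P₁ P₂ = p * ∫ x, f x ∂P₁ + (1 - p) * ∫ x, f x ∂P₂ := by
  rw [mix, integral_add_measure (h₁.smul_measure ENNReal.ofReal_ne_top)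
    (h₂.smul_measure ENNReal.ofReal_ne_top), integral_smul_measure, integral_smul_measure,
    ENNReal.toReal_ofReal hp₀, ENNReal.toReal_ofReal (sub_nonneg.2 hp₁), smul_eq_mul, smul_eq_mul]

theorem integral_unif {a b : ℝ} (hab : a < b) (f : ℝ → ℝ) :
    ∫ x, f x ∂unif a b = (b - a)⁻¹ * ∫ x in a..b, f x := by
  rw [unif, integral_smul_measure, ENNReal.toReal_inv, ENNReal.toReal_ofReal (sub_pos.2 hab).le,
    integral_Icc_eq_integral_Ioc, ← intervalIntegral.integral_of_le hab.le, smul_eq_mul]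

theorem Continuous.integrable_unif {f : ℝ → ℝ} (hf : Continuous f) {a b : ℝ} (hab : a < b) :
    Integrable f (unif a b) :=
  hf.integrableOn_Icc.smul_measure (by simpa using hab)

theorem min_sq_sub_eq (x : ℝ) {a b : ℝ} (hab : a ≤ b) :
    min ((x - a) ^ 2) ((x - b) ^ 2) = (|x - (a + b) / 2| - (b - a) / 2) ^ 2 := by
  rcases le_total x ((a + b) / 2) with h | h
  · rw [min_eq_left (by nlinarith), abs_of_nonpos (by linarith)]
    ring
  · rw [min_eq_right (by nlinarith), abs_of_nonneg (by linarith)]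
    ring

theorem distortion_pair (P : Measure ℝ) (a b : ℝ) :
    distortion P {a, b} = ∫ x, min ((x - a) ^ 2) ((x - b) ^ 2) ∂P := by
  simp only [distortion, Finset.coe_pair, image_pair, csInf_pair]

theorem Finset.exists_eq_pair_of_card_le_two {α : Type*} [LinearOrder α] {γ : Finset α}
    (hne : γ.Nonempty) (hcard : γ.card ≤ 2) : ∃ a b, a ≤ b ∧ γ = {a, b} := by
  interval_cases h : γ.card
  · exact absurd (Finset.card_eq_zero.1 h) hne.ne_empty
  · obtain ⟨a, rfl⟩ := Finset.card_eq_one.1 h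
    exact ⟨a, a, le_rfl, by simp⟩
  · obtain ⟨a, b, -, rfl⟩ := Finset.card_eq_two.1 h
    rcases le_total a b with hab | hba
    · exact ⟨a, b, hab, rfl⟩
    · exact ⟨b, a, hba, Finset.pair_comm a b⟩

theorem isOptimal_of_forall_le {P : Measure ℝ} {n : ℕ} {γ₀ : Finset ℝ} (hne : γ₀.Nonempty)
    (hcard : γ₀.card ≤ n)
    (hmin : ∀ γ : Finset ℝ, γ.Nonempty → γ.card ≤ n → distortion P γ₀ ≤ distortion P γ) :
    IsOptimal P n γ₀ := by
  have hmem :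
      distortion P γ₀ ∈ { v | ∃ γ : Finset ℝ, γ.Nonempty ∧ γ.card ≤ n ∧ v = distortion P γ } :=
    ⟨γ₀, hne, hcard, rfl⟩
  have hlb : ∀ v ∈ { v | ∃ γ : Finset ℝ, γ.Nonempty ∧ γ.card ≤ n ∧ v = distortion P γ },
      distortion P γ₀ ≤ v := by
    rintro v ⟨γ, hγne, hγcard, rfl⟩
    exact hmin γ hγne hγcard
  exact ⟨hne, hcard, le_antisymm (le_csInf ⟨_, hmem⟩ hlb) (csInf_le ⟨_, hlb⟩ hmem)⟩

theorem distortion_mix_unif_pair {a b : ℝ} (hab : a ≤ b) :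
    distortion (mix (1/3) (unif 0 1) (unif 1 2)) {a, b} =
      1 / 3 * (∫ x in (0:ℝ)..1, (|x - (a + b) / 2| - (b - a) / 2) ^ 2)
        + 2 / 3 * ∫ x in (1:ℝ)..2, (|x - (a + b) / 2| - (b - a) / 2) ^ 2 := by
  have hcont : Continuous fun x : ℝ => (|x - (a + b) / 2| - (b - a) / 2) ^ 2 := by fun_prop
  simp_rw [distortion_pair, min_sq_sub_eq _ hab]
  rw [integral_mix (by norm_num) (by norm_num) (hcont.integrable_unif zero_lt_one)
    (hcont.integrable_unif one_lt_two), integral_unif zero_lt_one, integral_unif one_lt_two]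
  norm_num

theorem one_div_twelve_le_weighted_integral_sq_abs_sub_sub (m d : ℝ) :
    1 / 12 ≤ 1 / 3 * (∫ x in (0:ℝ)..1, (|x - m| - d) ^ 2)
      + 2 / 3 * ∫ x in (1:ℝ)..2, (|x - m| - d) ^ 2 := by
  simp only [integral_sq_abs_sub_sub]
  -- In the middle ranges the variance exceeds `1 / 12` by a nonnegative multiple of `(m - 1) ^ 2`.
  rcases le_total m 0 with h0 | h0
  · rw [abs_of_nonneg (a := 1 - m) (by linarith), abs_of_nonneg (a := 0 - m) (by linarith),
      abs_of_nonneg (a := 2 - m) (by linarith)]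
    nlinarith [sq_nonneg (d - (7 / 6 - m))]
  rcases le_total m 1 with h1 | h1
  · rw [abs_of_nonneg (a := 1 - m) (by linarith), abs_of_nonpos (a := 0 - m) (by linarith),
      abs_of_nonneg (a := 2 - m) (by linarith)]
    nlinarith [sq_nonneg (d - (m ^ 2 / 3 - m + 7 / 6)),
      mul_nonneg (sq_nonneg (m - 1)) (by nlinarith : (0:ℝ) ≤ 2 + 4 * m - m ^ 2)]
  rcases le_total m 2 with h2 | h2
  · rw [abs_of_nonpos (a := 1 - m) (by linarith), abs_of_nonpos (a := 0 - m) (by linarith),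
      abs_of_nonneg (a := 2 - m) (by linarith)]
    nlinarith [sq_nonneg (d - (2 * m ^ 2 / 3 - 5 * m / 3 + 3 / 2)),
      mul_nonneg (sq_nonneg (m - 1)) (by nlinarith : (0:ℝ) ≤ 1 - 2 * (m - 1) * (m - 2))]
  · rw [abs_of_nonpos (a := 1 - m) (by linarith), abs_of_nonpos (a := 0 - m) (by linarith),
      abs_of_nonpos (a := 2 - m) (by linarith)]
    nlinarith [sq_nonneg (d - (m - 7 / 6))]

theorem stmt4 :
    IsOptimal (mix (1/3) (unif 0 1) (unif 1 2)) 2 {1/2, 3/2} ∧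
    quantErr (mix (1/3) (unif 0 1) (unif 1 2)) 2 = 1 / 12 := by
  have hval : distortion (mix (1/3) (unif 0 1) (unif 1 2)) {1/2, 3/2} = 1 / 12 := by
    rw [distortion_mix_unif_pair (by norm_num), integral_sq_abs_sub_sub, integral_sq_abs_sub_sub]
    norm_num
  have hopt : IsOptimal (mix (1/3) (unif 0 1) (unif 1 2)) 2 {1/2, 3/2} := by
    refine isOptimal_of_forall_le (by simp) Finset.card_le_two fun γ hne hcard => ?_
    obtain ⟨a, b, hab, rfl⟩ := Finset.exists_eq_pair_of_card_le_two hne hcard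
    rw [hval, distortion_mix_unif_pair hab]
    exact one_div_twelve_le_weighted_integral_sq_abs_sub_sub _ _
  exact ⟨hopt, hopt.2.2.symm.trans hval⟩
end

section
/- Let P = (1/100)·P₁ + (99/100)·P₂ where P₁ is uniform on [0,1/3] and P₂ is uniform on [2/3,1]. Any three-point set γ with all three points in [2/3,1] has distortion error ∫ min_{c∈γ}(x−c)² dP at least (1/100)·∫₀^{1/3} 3(x−2/3)² dx = 7/2700 > 103/43200; hence any optimal set of three-means contains a point less than 2/3. -/
open MeasureTheory Set

lemma sq_int (a b c : ℝ) : ∫ x in a..b, (x - c) ^ 2 = ((b - c) ^ 3 - (a - c) ^ 3) / 3 := by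
  rw [show (fun x : ℝ => (x - c) ^ 2) = fun x => (fun y : ℝ => y ^ 2) (x - c) from rfl,
    intervalIntegral.integral_comp_sub_right (fun y : ℝ => y ^ 2) c, integral_pow]
  norm_num

lemma F_cont (γ : Finset ℝ) (h : γ.Nonempty) :
    Continuous (fun x : ℝ => γ.inf' h (fun c => (x - c) ^ 2)) :=
  Continuous.finset_inf'_apply h (fun c _ => by fun_prop)

lemma distortion_eq (γ : Finset ℝ) (h : γ.Nonempty) :
    distortion (mix (1/100) (unif 0 (1/3)) (unif (2/3) 1)) γ =
      (3/100) * (∫ x in (0:ℝ)..(1/3), γ.inf' h (fun c => (x - c) ^ 2))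
      + (297/100) * (∫ x in (2/3:ℝ)..1, γ.inf' h (fun c => (x - c) ^ 2)) := by
  have hFc := F_cont γ h
  have hrw : (fun x : ℝ => sInf ((fun c => (x - c) ^ 2) '' (γ : Set ℝ)))
      = fun x : ℝ => γ.inf' h (fun c => (x - c) ^ 2) :=
    funext fun x => (Finset.inf'_eq_csInf_image γ h _).symm
  have i1 : Integrable (fun x : ℝ => γ.inf' h (fun c => (x - c) ^ 2))
      (volume.restrict (Icc (0:ℝ) (1/3))) := hFc.integrableOn_Icc
  have i2 : Integrable (fun x : ℝ => γ.inf' h (fun c => (x - c) ^ 2))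
      (volume.restrict (Icc (2/3:ℝ) 1)) := hFc.integrableOn_Icc
  have hne1 : (ENNReal.ofReal (1/3 - 0))⁻¹ ≠ ⊤ := by
    simp [ENNReal.inv_ne_top]
  have hne2 : (ENNReal.ofReal (1 - 2/3))⁻¹ ≠ ⊤ := by
    simp [ENNReal.inv_ne_top]; norm_num
  unfold distortion mix unif
  rw [hrw, integral_add_measure
    (((i1.smul_measure hne1).smul_measure (by simp)))
    (((i2.smul_measure hne2).smul_measure (by simp))),
    integral_smul_measure, integral_smul_measure, integral_smul_measure, integral_smul_measure]
  rw [integral_Icc_eq_integral_Ioc, integral_Icc_eq_integral_Ioc,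
    ← intervalIntegral.integral_of_le (by norm_num : (0:ℝ) ≤ 1/3),
    ← intervalIntegral.integral_of_le (by norm_num : (2/3:ℝ) ≤ 1)]
  rw [ENNReal.toReal_inv, ENNReal.toReal_inv, ENNReal.toReal_ofReal (by norm_num),
    ENNReal.toReal_ofReal (by norm_num), ENNReal.toReal_ofReal (by norm_num),
    ENNReal.toReal_ofReal (by norm_num)]
  simp only [smul_eq_mul]
  ring

lemma lower_bound (γ : Finset ℝ) (h : γ.Nonempty) (hγ : ∀ c ∈ γ, 2/3 ≤ c) :
    7 / 2700 ≤ distortion (mix (1/100) (unif 0 (1/3)) (unif (2/3) 1)) γ := by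
  rw [distortion_eq γ h]
  have hFc := F_cont γ h
  have h1 : (∫ x in (0:ℝ)..(1/3), (x - 2/3) ^ 2)
      ≤ ∫ x in (0:ℝ)..(1/3), γ.inf' h (fun c => (x - c) ^ 2) := by
    apply intervalIntegral.integral_mono_on (by norm_num)
      (by apply Continuous.intervalIntegrable; fun_prop)
      (hFc.intervalIntegrable _ _)
    intro x hx
    apply Finset.le_inf'
    intro c hc
    have := hγ c hc
    nlinarith [hx.1, hx.2]
  have h2 : (0:ℝ) ≤ ∫ x in (2/3:ℝ)..1, γ.inf' h (fun c => (x - c) ^ 2) := by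
    apply intervalIntegral.integral_nonneg (by norm_num)
    intro x _
    exact Finset.le_inf' h _ (fun c _ => sq_nonneg _)
  rw [sq_int] at h1
  nlinarith [h1, h2]

lemma gamma0_card : ({1/6, 3/4, 11/12} : Finset ℝ).card ≤ 3 := by
  apply (Finset.card_insert_le _ _).trans
  have := Finset.card_insert_le (3/4 : ℝ) {11/12}
  simp at this ⊢
  omega

lemma upper_bound :
    distortion (mix (1/100) (unif 0 (1/3)) (unif (2/3) 1)) ({1/6, 3/4, 11/12} : Finset ℝ)
      ≤ 103 / 43200 := by
  have h : ({1/6, 3/4, 11/12} : Finset ℝ).Nonempty := ⟨1/6, by simp⟩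
  rw [distortion_eq _ h]
  have hFc := F_cont _ h
  have hm1 : (1/6 : ℝ) ∈ ({1/6, 3/4, 11/12} : Finset ℝ) := by simp
  have hm2 : (3/4 : ℝ) ∈ ({1/6, 3/4, 11/12} : Finset ℝ) := by simp
  have hm3 : (11/12 : ℝ) ∈ ({1/6, 3/4, 11/12} : Finset ℝ) := by simp
  have h1 : (∫ x in (0:ℝ)..(1/3), ({1/6, 3/4, 11/12} : Finset ℝ).inf' h (fun c => (x - c) ^ 2))
      ≤ ∫ x in (0:ℝ)..(1/3), (x - 1/6) ^ 2 := by
    apply intervalIntegral.integral_mono_on (by norm_num)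
      (hFc.intervalIntegrable _ _)
      (by apply Continuous.intervalIntegrable; fun_prop)
    intro x _
    exact Finset.inf'_le _ hm1
  have hsplit : (∫ x in (2/3:ℝ)..1, ({1/6, 3/4, 11/12} : Finset ℝ).inf' h (fun c => (x - c) ^ 2))
      = (∫ x in (2/3:ℝ)..(5/6), ({1/6, 3/4, 11/12} : Finset ℝ).inf' h (fun c => (x - c) ^ 2))
        + ∫ x in (5/6:ℝ)..1, ({1/6, 3/4, 11/12} : Finset ℝ).inf' h (fun c => (x - c) ^ 2) :=
    (intervalIntegral.integral_add_adjacent_intervals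
      (hFc.intervalIntegrable _ _) (hFc.intervalIntegrable _ _)).symm
  have h2 : (∫ x in (2/3:ℝ)..(5/6), ({1/6, 3/4, 11/12} : Finset ℝ).inf' h (fun c => (x - c) ^ 2))
      ≤ ∫ x in (2/3:ℝ)..(5/6), (x - 3/4) ^ 2 := by
    apply intervalIntegral.integral_mono_on (by norm_num)
      (hFc.intervalIntegrable _ _)
      (by apply Continuous.intervalIntegrable; fun_prop)
    intro x _
    exact Finset.inf'_le _ hm2
  have h3 : (∫ x in (5/6:ℝ)..1, ({1/6, 3/4, 11/12} : Finset ℝ).inf' h (fun c => (x - c) ^ 2))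
      ≤ ∫ x in (5/6:ℝ)..1, (x - 11/12) ^ 2 := by
    apply intervalIntegral.integral_mono_on (by norm_num)
      (hFc.intervalIntegrable _ _)
      (by apply Continuous.intervalIntegrable; fun_prop)
    intro x _
    exact Finset.inf'_le _ hm3
  rw [sq_int] at h1 h2 h3
  rw [hsplit]
  nlinarith [h1, h2, h3]

lemma distortion_nonneg (P : Measure ℝ) (γ : Finset ℝ) : 0 ≤ distortion P γ := by
  apply integral_nonneg
  intro x
  exact Real.sInf_nonneg (fun y ⟨c, _, hc⟩ => hc ▸ sq_nonneg _)

theorem stmt8 :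
    (∀ γ : Finset ℝ, γ.card = 3 → (γ : Set ℝ) ⊆ Icc (2/3) 1 →
      7 / 2700 ≤ distortion (mix (1/100) (unif 0 (1/3)) (unif (2/3) 1)) γ) ∧
    (7 / 2700 : ℝ) > 103 / 43200 ∧
    (∀ γ : Finset ℝ, IsOptimal (mix (1/100) (unif 0 (1/3)) (unif (2/3) 1)) 3 γ →
      ∃ c ∈ γ, c < 2/3) := by
  set P := mix (1/100) (unif 0 (1/3)) (unif (2/3) 1)
  refine ⟨?_, by norm_num, ?_⟩
  · intro γ hcard hsub
    exact lower_bound γ (Finset.card_pos.mp (by omega)) (fun c hc => (hsub hc).1)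
  · intro γ ⟨hne, _, hopt⟩
    by_contra hcon
    push_neg at hcon
    have hlow : 7 / 2700 ≤ distortion P γ :=
      lower_bound γ hne (fun c hc => le_of_not_gt (by exact fun hlt => absurd (hcon c hc) (not_le.mpr hlt)))
    have hq : quantErr P 3 ≤ 103 / 43200 := by
      refine le_trans (csInf_le ⟨0, ?_⟩ ?_) upper_bound
      · rintro v ⟨γ', _, _, rfl⟩
        exact distortion_nonneg _ _
      · exact ⟨_, ⟨1/6, by simp⟩, gamma0_card, rfl⟩
    rw [hopt] at hlow
    linarith
end

section
/- Let P = (1/100)·P₁ + (99/100)·P₂ with P₁ uniform on [0,1/3] and P₂ uniform on [2/3,1]. The distortion error of the six-point set {1/6, 7/10, 23/30, 5/6, 9/10, 29/30} equals 31/67500; consequently V_n ≤ 31/67500 for all n ≥ 6. -/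
open MeasureTheory Set

/-- the explicit min function -/
noncomputable def gfun (x : ℝ) : ℝ :=
  min ((x-1/6)^2) (min ((x-7/10)^2) (min ((x-23/30)^2) (min ((x-5/6)^2)
    (min ((x-9/10)^2) ((x-29/30)^2)))))

lemma sInf6 (a b c d e f : ℝ) :
    sInf ({a,b,c,d,e,f} : Set ℝ) = min a (min b (min c (min d (min e f)))) := by
  rw [csInf_insert (Set.toFinite _).bddBelow (Set.insert_nonempty _ _),
      csInf_insert (Set.toFinite _).bddBelow (Set.insert_nonempty _ _),
      csInf_insert (Set.toFinite _).bddBelow (Set.insert_nonempty _ _),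
      csInf_insert (Set.toFinite _).bddBelow (Set.insert_nonempty _ _),
      csInf_insert (Set.toFinite _).bddBelow (Set.singleton_nonempty _),
      csInf_singleton]

lemma sInf_eq_gfun (x : ℝ) :
    sInf ((fun c => (x - c)^2) '' ((({1/6, 7/10, 23/30, 5/6, 9/10, 29/30} : Finset ℝ)) : Set ℝ))
      = gfun x := by
  have himg : (fun c => (x - c)^2) '' ((({1/6, 7/10, 23/30, 5/6, 9/10, 29/30} : Finset ℝ)) : Set ℝ)
      = {(x-1/6)^2, (x-7/10)^2, (x-23/30)^2, (x-5/6)^2, (x-9/10)^2, (x-29/30)^2} := by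
    simp [Set.image_insert_eq]
  rw [himg, sInf6, gfun]

lemma gfun_cont : Continuous gfun := by
  unfold gfun; fun_prop

lemma quad_integral (a b c : ℝ) : ∫ x in a..b, (x - c)^2 = ((b-c)^3 - (a-c)^3)/3 := by
  rw [intervalIntegral.integral_comp_sub_right (fun x => x^2) c, integral_pow]
  norm_num

lemma eqOn1 : EqOn gfun (fun x => (x - 1/6)^2) (uIcc (0:ℝ) (1/3)) := by
  rw [uIcc_of_le (by norm_num)]
  intro x hx
  obtain ⟨h1, h2⟩ := hx
  have a2 : (x-1/6)^2 ≤ (x-7/10)^2 := by nlinarith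
  have a3 : (x-1/6)^2 ≤ (x-23/30)^2 := by nlinarith
  have a4 : (x-1/6)^2 ≤ (x-5/6)^2 := by nlinarith
  have a5 : (x-1/6)^2 ≤ (x-9/10)^2 := by nlinarith
  have a6 : (x-1/6)^2 ≤ (x-29/30)^2 := by nlinarith
  simp only [gfun]
  rw [min_eq_left (le_min a2 (le_min a3 (le_min a4 (le_min a5 a6))))]

lemma eqOn2 : EqOn gfun (fun x => (x - 7/10)^2) (uIcc (2/3:ℝ) (11/15)) := by
  rw [uIcc_of_le (by norm_num)]
  intro x hx
  obtain ⟨h1, h2⟩ := hx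
  have a1 : (x-7/10)^2 ≤ (x-1/6)^2 := by nlinarith
  have a3 : (x-7/10)^2 ≤ (x-23/30)^2 := by nlinarith
  have a4 : (x-7/10)^2 ≤ (x-5/6)^2 := by nlinarith
  have a5 : (x-7/10)^2 ≤ (x-9/10)^2 := by nlinarith
  have a6 : (x-7/10)^2 ≤ (x-29/30)^2 := by nlinarith
  simp only [gfun]
  rw [min_eq_left (le_min a3 (le_min a4 (le_min a5 a6))), min_eq_right a1]

lemma eqOn3 : EqOn gfun (fun x => (x - 23/30)^2) (uIcc (11/15:ℝ) (4/5)) := by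
  rw [uIcc_of_le (by norm_num)]
  intro x hx
  obtain ⟨h1, h2⟩ := hx
  have a1 : (x-23/30)^2 ≤ (x-1/6)^2 := by nlinarith
  have a2 : (x-23/30)^2 ≤ (x-7/10)^2 := by nlinarith
  have a4 : (x-23/30)^2 ≤ (x-5/6)^2 := by nlinarith
  have a5 : (x-23/30)^2 ≤ (x-9/10)^2 := by nlinarith
  have a6 : (x-23/30)^2 ≤ (x-29/30)^2 := by nlinarith
  simp only [gfun]
  rw [min_eq_left (le_min a4 (le_min a5 a6)), min_eq_right a2, min_eq_right a1]

lemma eqOn4 : EqOn gfun (fun x => (x - 5/6)^2) (uIcc (4/5:ℝ) (13/15)) := by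
  rw [uIcc_of_le (by norm_num)]
  intro x hx
  obtain ⟨h1, h2⟩ := hx
  have a1 : (x-5/6)^2 ≤ (x-1/6)^2 := by nlinarith
  have a2 : (x-5/6)^2 ≤ (x-7/10)^2 := by nlinarith
  have a3 : (x-5/6)^2 ≤ (x-23/30)^2 := by nlinarith
  have a5 : (x-5/6)^2 ≤ (x-9/10)^2 := by nlinarith
  have a6 : (x-5/6)^2 ≤ (x-29/30)^2 := by nlinarith
  simp only [gfun]
  rw [min_eq_left (le_min a5 a6), min_eq_right a3, min_eq_right a2, min_eq_right a1]

lemma eqOn5 : EqOn gfun (fun x => (x - 9/10)^2) (uIcc (13/15:ℝ) (14/15)) := by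
  rw [uIcc_of_le (by norm_num)]
  intro x hx
  obtain ⟨h1, h2⟩ := hx
  have a1 : (x-9/10)^2 ≤ (x-1/6)^2 := by nlinarith
  have a2 : (x-9/10)^2 ≤ (x-7/10)^2 := by nlinarith
  have a3 : (x-9/10)^2 ≤ (x-23/30)^2 := by nlinarith
  have a4 : (x-9/10)^2 ≤ (x-5/6)^2 := by nlinarith
  have a6 : (x-9/10)^2 ≤ (x-29/30)^2 := by nlinarith
  simp only [gfun]
  rw [min_eq_left a6, min_eq_right a4, min_eq_right a3, min_eq_right a2, min_eq_right a1]

lemma eqOn6 : EqOn gfun (fun x => (x - 29/30)^2) (uIcc (14/15:ℝ) 1) := by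
  rw [uIcc_of_le (by norm_num)]
  intro x hx
  obtain ⟨h1, h2⟩ := hx
  have a1 : (x-29/30)^2 ≤ (x-1/6)^2 := by nlinarith
  have a2 : (x-29/30)^2 ≤ (x-7/10)^2 := by nlinarith
  have a3 : (x-29/30)^2 ≤ (x-23/30)^2 := by nlinarith
  have a4 : (x-29/30)^2 ≤ (x-5/6)^2 := by nlinarith
  have a5 : (x-29/30)^2 ≤ (x-9/10)^2 := by nlinarith
  simp only [gfun]
  rw [min_eq_right a5, min_eq_right a4, min_eq_right a3, min_eq_right a2, min_eq_right a1]

lemma gfun_intInt (a b : ℝ) : IntervalIntegrable gfun volume a b :=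
  gfun_cont.intervalIntegrable a b

lemma int1 : ∫ x in (0:ℝ)..(1/3), gfun x = 1/324 := by
  rw [intervalIntegral.integral_congr eqOn1, quad_integral]
  norm_num

lemma int2 : ∫ x in (2/3:ℝ)..1, gfun x = 1/8100 := by
  rw [← intervalIntegral.integral_add_adjacent_intervals (b := 11/15)
        (gfun_intInt _ _) (gfun_intInt _ _),
      ← intervalIntegral.integral_add_adjacent_intervals (a := 11/15) (b := 4/5)
        (gfun_intInt _ _) (gfun_intInt _ _),
      ← intervalIntegral.integral_add_adjacent_intervals (a := 4/5) (b := 13/15)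
        (gfun_intInt _ _) (gfun_intInt _ _),
      ← intervalIntegral.integral_add_adjacent_intervals (a := 13/15) (b := 14/15)
        (gfun_intInt _ _) (gfun_intInt _ _),
      intervalIntegral.integral_congr eqOn2, intervalIntegral.integral_congr eqOn3,
      intervalIntegral.integral_congr eqOn4, intervalIntegral.integral_congr eqOn5,
      intervalIntegral.integral_congr eqOn6,
      quad_integral, quad_integral, quad_integral, quad_integral, quad_integral]
  norm_num

lemma distortion_value :
    distortion (mix (1/100) (unif 0 (1/3)) (unif (2/3) 1))
      {1/6, 7/10, 23/30, 5/6, 9/10, 29/30} = 31 / 67500 := by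
  have hInt1 : Integrable gfun (volume.restrict (Icc (0:ℝ) (1/3))) :=
    gfun_cont.integrableOn_Icc
  have hInt2 : Integrable gfun (volume.restrict (Icc (2/3:ℝ) 1)) :=
    gfun_cont.integrableOn_Icc
  have hne1 : (ENNReal.ofReal (1/3 - 0))⁻¹ ≠ ⊤ := by
    rw [ENNReal.inv_ne_top]
    norm_num [ENNReal.ofReal_eq_zero]
  have hne2 : (ENNReal.ofReal (1 - 2/3))⁻¹ ≠ ⊤ := by
    rw [ENNReal.inv_ne_top]
    norm_num [ENNReal.ofReal_eq_zero]
  have hu1 : Integrable gfun (unif 0 (1/3)) := by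
    rw [unif]; exact hInt1.smul_measure hne1
  have hu2 : Integrable gfun (unif (2/3) 1) := by
    rw [unif]; exact hInt2.smul_measure hne2
  rw [distortion]
  simp only [sInf_eq_gfun]
  rw [mix, integral_add_measure (hu1.smul_measure ENNReal.ofReal_ne_top)
        (hu2.smul_measure ENNReal.ofReal_ne_top),
      integral_smul_measure, integral_smul_measure]
  rw [unif, unif, integral_smul_measure, integral_smul_measure]
  rw [MeasureTheory.integral_Icc_eq_integral_Ioc, MeasureTheory.integral_Icc_eq_integral_Ioc,
      ← intervalIntegral.integral_of_le (by norm_num : (0:ℝ) ≤ 1/3),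
      ← intervalIntegral.integral_of_le (by norm_num : (2/3:ℝ) ≤ 1)]
  rw [int1, int2]
  rw [ENNReal.toReal_ofReal (by norm_num), ENNReal.toReal_ofReal (by norm_num),
      ENNReal.toReal_inv, ENNReal.toReal_inv,
      ENNReal.toReal_ofReal (by norm_num), ENNReal.toReal_ofReal (by norm_num)]
  norm_num

theorem stmt18 :
    distortion (mix (1/100) (unif 0 (1/3)) (unif (2/3) 1))
        {1/6, 7/10, 23/30, 5/6, 9/10, 29/30} = 31 / 67500 ∧
    ∀ n : ℕ, 6 ≤ n →
      quantErr (mix (1/100) (unif 0 (1/3)) (unif (2/3) 1)) n ≤ 31 / 67500 := by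
  refine ⟨distortion_value, fun n hn => ?_⟩
  have hcard : ({1/6, 7/10, 23/30, 5/6, 9/10, 29/30} : Finset ℝ).card ≤ 6 := by
    apply le_trans (Finset.card_insert_le _ _)
    apply Nat.succ_le_succ
    apply le_trans (Finset.card_insert_le _ _)
    apply Nat.succ_le_succ
    apply le_trans (Finset.card_insert_le _ _)
    apply Nat.succ_le_succ
    apply le_trans (Finset.card_insert_le _ _)
    apply Nat.succ_le_succ
    apply le_trans (Finset.card_insert_le _ _)
    simp
  set P := mix (1/100) (unif 0 (1/3)) (unif (2/3) 1)
  have hmem : (31 : ℝ) / 67500 ∈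
      { v | ∃ γ : Finset ℝ, γ.Nonempty ∧ γ.card ≤ n ∧ v = distortion P γ } :=
    ⟨{1/6, 7/10, 23/30, 5/6, 9/10, 29/30}, ⟨1/6, by simp⟩, hcard.trans hn,
      distortion_value.symm⟩
  have hbdd : BddBelow { v | ∃ γ : Finset ℝ, γ.Nonempty ∧ γ.card ≤ n ∧ v = distortion P γ } := by
    refine ⟨0, fun v hv => ?_⟩
    obtain ⟨γ', _, _, rfl⟩ := hv
    apply integral_nonneg
    intro x
    apply Real.sInf_nonneg
    rintro y ⟨c, _, rfl⟩
    positivity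
  exact csInf_le hbdd hmem
end
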